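/- Let (Ω, F, P) be a non-atomic probability space, let 1 ≤ p < ∞, and let ρ : L^p(P) → ℝ be a law-invariant bounded linear functional, i.e., ρ(X) = ρ(X') whenever X, X' ∈ L^p(P) satisfy X ~ X'. Then ρ(X) = ρ(1)·E[X] for every X ∈ L^p(P). -/

import Mathlib

open MeasureTheory ProbabilityTheory Set
open scoped ENNReal

/-- A measure is nonatomic if every measurable set of positive measure admits a measurable
subset of strictly smaller positive measure. -/
def Nonatomic {Ω : Type*} [MeasurableSpace Ω] (μ : Measure Ω) : Prop :=
  ∀ s : Set Ω, MeasurableSet s → 0 < μ s →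
    ∃ t, t ⊆ s ∧ MeasurableSet t ∧ 0 < μ t ∧ μ t < μ s


namespace Nonatomic

variable {Ω : Type*} [MeasurableSpace Ω] {μ : Measure Ω}

lemma exists_le_half (hμ : Nonatomic μ) {s : Set Ω} (hs : MeasurableSet s)
    (h0 : 0 < μ s) (hfin : μ s ≠ ∞) :
    ∃ t, t ⊆ s ∧ MeasurableSet t ∧ 0 < μ t ∧ μ t ≤ μ s / 2 := by
  obtain ⟨t, hts, htm, ht0, htlt⟩ := hμ s hs h0
  by_cases h : μ t ≤ μ s / 2
  · exact ⟨t, hts, htm, ht0, h⟩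
  · have htfin : μ t ≠ ∞ := ne_top_of_le_ne_top hfin htlt.le
    have hdiff : μ (s \ t) = μ s - μ t := measure_diff hts htm.nullMeasurableSet htfin
    refine ⟨s \ t, diff_subset, hs.diff htm, ?_, ?_⟩
    · rw [hdiff]
      exact tsub_pos_of_lt htlt
    · rw [hdiff, tsub_le_iff_right]
      calc μ s = μ s / 2 + μ s / 2 := (ENNReal.add_halves _).symm
      _ ≤ μ s / 2 + μ t := add_le_add_right (le_of_not_ge h) _

lemma exists_le (hμ : Nonatomic μ) {s : Set Ω} (hs : MeasurableSet s)
    (h0 : 0 < μ s) (hfin : μ s ≠ ∞) {ε : ℝ≥0∞} (hε : 0 < ε) :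
    ∃ t, t ⊆ s ∧ MeasurableSet t ∧ 0 < μ t ∧ μ t ≤ ε := by
  have key : ∀ n : ℕ, ∃ t, t ⊆ s ∧ MeasurableSet t ∧ 0 < μ t ∧ μ t ≤ μ s / 2 ^ n := by
    intro n
    induction n with
    | zero => exact ⟨s, subset_rfl, hs, h0, by simp⟩
    | succ n ih =>
      obtain ⟨t, hts, htm, ht0, hle⟩ := ih
      have hfin' : μ s / 2 ^ n ≠ ∞ := by
        rw [ne_eq, ENNReal.div_eq_top]
        rintro (⟨-, h⟩ | ⟨h, -⟩)
        · exact pow_ne_zero n (by norm_num : (2:ℝ≥0∞) ≠ 0) h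
        · exact hfin h
      have htfin : μ t ≠ ∞ := ne_top_of_le_ne_top hfin' hle
      obtain ⟨u, hut, hum, hu0, hu2⟩ := hμ.exists_le_half htm ht0 htfin
      refine ⟨u, hut.trans hts, hum, hu0, hu2.trans ?_⟩
      have heq : μ s / 2 ^ (n+1) = (μ s / 2 ^ n) / 2 := by
        rw [div_eq_mul_inv, div_eq_mul_inv, div_eq_mul_inv, pow_succ,
          ENNReal.mul_inv (by simp) (by simp), mul_assoc]
      rw [heq]
      exact ENNReal.div_le_div_right hle 2
  by_cases hεtop : ε = ∞
  · exact ⟨s, subset_rfl, hs, h0, by simp [hεtop]⟩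
  obtain ⟨n, hn⟩ : ∃ n : ℕ, μ s / ε < 2 ^ n := by
    have : μ s / ε ≠ ∞ := by
      rw [ne_eq, ENNReal.div_eq_top]
      rintro (⟨-, h⟩ | ⟨h, -⟩)
      · exact hε.ne' h
      · exact hfin h
    obtain ⟨n, hn⟩ := ENNReal.exists_nat_gt this
    exact ⟨n, hn.trans_le (by exact_mod_cast Nat.cast_le.2 (Nat.lt_two_pow_self (n := n)).le)⟩
  obtain ⟨t, hts, htm, ht0, hle⟩ := key n
  refine ⟨t, hts, htm, ht0, hle.trans ?_⟩
  rw [ENNReal.div_le_iff_le_mul (Or.inl (by positivity)) (Or.inl (by simp))]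
  rw [ENNReal.div_lt_iff (Or.inl hε.ne') (Or.inl hεtop)] at hn
  exact hn.le.trans (by rw [mul_comm])

lemma exists_measure_eq (hμ : Nonatomic μ) [IsFiniteMeasure μ] {s : Set Ω}
    (hs : MeasurableSet s) {c : ℝ≥0∞} (hc : c ≤ μ s) :
    ∃ t, t ⊆ s ∧ MeasurableSet t ∧ μ t = c := by
  have hcfin : c ≠ ∞ := ne_top_of_le_ne_top (measure_ne_top μ s) hc
  have step : ∀ t : Set Ω, MeasurableSet t → t ⊆ s → μ t ≤ c →
      ∃ t' : Set Ω, MeasurableSet t' ∧ t ⊆ t' ∧ t' ⊆ s ∧ μ t' ≤ c ∧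
        ∀ u, MeasurableSet u → u ⊆ s \ t → μ t + μ u ≤ c → μ t + μ u / 2 ≤ μ t' := by
    intro t htm hts htc
    set D := ⨆ (u : {u : Set Ω // MeasurableSet u ∧ u ⊆ s \ t ∧ μ t + μ u ≤ c}), μ u.1 with hD
    have hle : ∀ u, MeasurableSet u → u ⊆ s \ t → μ t + μ u ≤ c → μ u ≤ D := by
      intro u hum hus huc
      exact le_iSup_of_le ⟨u, hum, hus, huc⟩ le_rfl
    by_cases hD0 : D = 0
    · refine ⟨t, htm, subset_rfl, hts, htc, fun u hum hus huc => ?_⟩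
      have h := hle u hum hus huc
      rw [hD0, le_zero_iff] at h
      simp [h]
    · have hDc : D ≤ c := by
        refine iSup_le fun u => ?_
        exact le_trans le_add_self u.2.2.2
      have hDtop : D ≠ ∞ := ne_top_of_le_ne_top hcfin hDc
      obtain ⟨u, hu⟩ := lt_iSup_iff.mp (ENNReal.half_lt_self hD0 hDtop)
      have hust : u.1 ⊆ s \ t := u.2.2.1
      have hdisj : Disjoint t u.1 := (subset_diff.mp hust).2.symm
      have hmu : μ (t ∪ u.1) = μ t + μ u.1 := measure_union hdisj u.2.1
      refine ⟨t ∪ u.1, htm.union u.2.1, subset_union_left,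
        union_subset hts (hust.trans diff_subset), by rw [hmu]; exact u.2.2.2,
        fun v hvm hvs hvc => ?_⟩
      rw [hmu]
      refine add_le_add_right ?_ _
      calc μ v / 2 ≤ D / 2 := ENNReal.div_le_div_right (hle v hvm hvs hvc) 2
      _ ≤ μ u.1 := hu.le
  choose next hnm hnsub hnsubs hnle hnkey using step
  let f : ℕ → {t : Set Ω // MeasurableSet t ∧ t ⊆ s ∧ μ t ≤ c} := fun n =>
    Nat.recAux ⟨∅, MeasurableSet.empty, empty_subset s, by simp⟩
      (fun _ p => ⟨next p.1 p.2.1 p.2.2.1 p.2.2.2,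
        hnm p.1 p.2.1 p.2.2.1 p.2.2.2,
        hnsubs p.1 p.2.1 p.2.2.1 p.2.2.2,
        hnle p.1 p.2.1 p.2.2.1 p.2.2.2⟩) n
  set F : ℕ → Set Ω := fun n => (f n).1 with hF
  have hFm : ∀ n, MeasurableSet (F n) := fun n => (f n).2.1
  have hFs : ∀ n, F n ⊆ s := fun n => (f n).2.2.1
  have hFc : ∀ n, μ (F n) ≤ c := fun n => (f n).2.2.2
  have hFsucc : ∀ n, F n ⊆ F (n+1) := fun n =>
    hnsub (f n).1 (f n).2.1 (f n).2.2.1 (f n).2.2.2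
  have hFkey : ∀ n, ∀ u, MeasurableSet u → u ⊆ s \ F n → μ (F n) + μ u ≤ c →
      μ (F n) + μ u / 2 ≤ μ (F (n+1)) := fun n =>
    hnkey (f n).1 (f n).2.1 (f n).2.2.1 (f n).2.2.2
  have hFmono : Monotone F := monotone_nat_of_le_succ hFsucc
  set T : Set Ω := ⋃ n, F n with hT
  have hTm : MeasurableSet T := MeasurableSet.iUnion hFm
  have hTs : T ⊆ s := iUnion_subset hFs
  have hTc : μ T ≤ c := by
    rw [hT, (hFmono.directed_le).measure_iUnion]
    exact iSup_le hFc
  refine ⟨T, hTs, hTm, ?_⟩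
  by_contra hne
  have hTlt : μ T < c := lt_of_le_of_ne hTc hne
  have hdiffpos : 0 < μ (s \ T) := by
    have : μ (s \ T) = μ s - μ T := measure_diff hTs hTm.nullMeasurableSet (measure_ne_top μ T)
    rw [this]
    exact tsub_pos_of_lt (hTlt.trans_le hc)
  obtain ⟨u, hus, hum, hu0, huε⟩ := hμ.exists_le (hs.diff hTm) hdiffpos
    (measure_ne_top μ _) (tsub_pos_of_lt hTlt)
  -- u ⊆ s \ T, 0 < μ u ≤ c - μ T
  have hadm : ∀ n, μ (F n) + μ u ≤ c := by
    intro n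
    have h1 : μ (F n) ≤ μ T := measure_mono (subset_iUnion F n)
    calc μ (F n) + μ u ≤ μ T + (c - μ T) := add_le_add h1 huε
    _ = c := add_tsub_cancel_of_le hTlt.le
  have husn : ∀ n, u ⊆ s \ F n := fun n =>
    hus.trans (diff_subset_diff_right (subset_iUnion F n))
  have hgrow : ∀ n : ℕ, (n : ℝ≥0∞) * (μ u / 2) ≤ μ (F n) := by
    intro n
    induction n with
    | zero => simp
    | succ n ih =>
      have := hFkey n u hum (husn n) (hadm n)
      push_cast
      calc ((n : ℝ≥0∞) + 1) * (μ u / 2) = (n : ℝ≥0∞) * (μ u / 2) + μ u / 2 := by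
            rw [add_mul, one_mul]
      _ ≤ μ (F n) + μ u / 2 := add_le_add_left ih _
      _ ≤ μ (F (n+1)) := this
  have hε0 : 0 < μ u / 2 := ENNReal.div_pos hu0.ne' (by norm_num)
  have hεtop : μ u / 2 ≠ ∞ := by
    have : μ u ≠ ∞ := measure_ne_top μ u
    rw [ne_eq, ENNReal.div_eq_top]
    rintro (⟨-, h⟩ | ⟨h, -⟩)
    · norm_num at h
    · exact this h
  obtain ⟨n, hn⟩ := ENNReal.exists_nat_gt (r := c / (μ u / 2)) (by
    rw [ne_eq, ENNReal.div_eq_top]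
    rintro (⟨-, h⟩ | ⟨h, -⟩)
    · exact hε0.ne' h
    · exact hcfin h)
  rw [ENNReal.div_lt_iff (Or.inl hε0.ne') (Or.inl hεtop)] at hn
  exact absurd ((hgrow n).trans (hFc n)) hn.not_ge


end Nonatomic

lemma identDistrib_indicator_one {Ω : Type*} [MeasurableSpace Ω]
    {μ : Measure Ω} [IsProbabilityMeasure μ]
    {A B : Set Ω} (hA : MeasurableSet A) (hB : MeasurableSet B) (h : μ A = μ B) :
    IdentDistrib (A.indicator fun _ => (1:ℝ)) (B.indicator fun _ => (1:ℝ)) μ μ := by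
  classical
  have hmeas : ∀ {C : Set Ω}, MeasurableSet C →
      Measurable (C.indicator fun _ => (1:ℝ)) := fun hC =>
    measurable_const.indicator hC
  refine ⟨(hmeas hA).aemeasurable, (hmeas hB).aemeasurable, ?_⟩
  ext t ht
  rw [Measure.map_apply (hmeas hA) ht, Measure.map_apply (hmeas hB) ht]
  have hpre : ∀ C : Set Ω, (C.indicator fun _ => (1:ℝ)) ⁻¹' t =
      (if (1:ℝ) ∈ t then C else ∅) ∪ (if (0:ℝ) ∈ t then Cᶜ else ∅) := by
    intro C
    ext ω
    by_cases hω : ω ∈ C <;> by_cases h1 : (1:ℝ) ∈ t <;> by_cases h0 : (0:ℝ) ∈ t <;>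
      simp [Set.indicator, hω, h1, h0]
  rw [hpre A, hpre B]
  have hcompl : ∀ {C : Set Ω}, MeasurableSet C → μ Cᶜ = 1 - μ C := fun hC =>
    prob_compl_eq_one_sub hC
  split_ifs with h1 h0 h0
  · rw [Set.union_compl_self, Set.union_compl_self]
  · simp [h]
  · simp [hcompl hA, hcompl hB, h]
  · simp

set_option maxHeartbeats 1000000 in
/-- For `1 ≤ p < ∞`, every law-invariant bounded linear functional on `L^p` over a
non-atomic probability space collapses to the mean: `ρ(X) = ρ(1)·E[X]`. -/
theorem lawInvariant_functional_Lp_collapses_to_mean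
    {Ω : Type*} [MeasurableSpace Ω] (P : Measure Ω) [IsProbabilityMeasure P]
    (hP : Nonatomic P) (p : ℝ≥0∞) [Fact (1 ≤ p)] (hp : p ≠ ∞)
    (ρ : Lp ℝ p P →L[ℝ] ℝ)
    (hρ : ∀ X X' : Lp ℝ p P, IdentDistrib (X : Ω → ℝ) (X' : Ω → ℝ) P P → ρ X = ρ X') :
    ∀ X : Lp ℝ p P, ρ X = ρ (Lp.const p P (1 : ℝ)) * ∫ ω, X ω ∂P := by
  have hp1 : (1 : ℝ≥0∞) ≤ p := Fact.out
  have hp0 : p ≠ 0 := (lt_of_lt_of_le zero_lt_one hp1).ne'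
  set L : ℝ := ρ (Lp.const p P (1:ℝ)) with hLdef
  set α : ℝ := 1 / p.toReal with hαdef
  have hpt : 1 ≤ p.toReal := by
    have := ENNReal.toReal_mono hp hp1
    simpa using this
  have hα0 : 0 < α := by rw [hαdef]; positivity
  have hα1 : α ≤ 1 := by
    rw [hαdef, div_le_one (by linarith)]; linarith
  set ind : ∀ (A : Set Ω), MeasurableSet A → Lp ℝ p P :=
    fun A hA => indicatorConstLp p hA (measure_ne_top P A) (1:ℝ) with hinddef
  -- law invariance for indicators
  have hInv : ∀ (A B : Set Ω) (hA : MeasurableSet A) (hB : MeasurableSet B),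
      P A = P B → ρ (ind A hA) = ρ (ind B hB) := by
    intro A B hA hB hAB
    refine hρ _ _ ?_
    have h1 : IdentDistrib (ind A hA : Ω → ℝ) (A.indicator fun _ => (1:ℝ)) P P :=
      IdentDistrib.of_ae_eq (Lp.aestronglyMeasurable _).aemeasurable indicatorConstLp_coeFn
    have h2 := identDistrib_indicator_one hA hB hAB
    have h3 : IdentDistrib (B.indicator fun _ => (1:ℝ)) (ind B hB : Ω → ℝ) P P :=
      IdentDistrib.of_ae_eq (measurable_const.indicator hB).aemeasurable
        indicatorConstLp_coeFn.symm
    exact (h1.trans h2).trans h3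
  -- additivity over disjoint unions
  have hUnion : ∀ (A B : Set Ω) (hA : MeasurableSet A) (hB : MeasurableSet B),
      Disjoint A B → ρ (ind (A ∪ B) (hA.union hB)) = ρ (ind A hA) + ρ (ind B hB) := by
    intro A B hA hB hd
    have h : ind (A ∪ B) (hA.union hB) = ind A hA + ind B hB :=
      indicatorConstLp_disjoint_union hA hB (measure_ne_top P A) (measure_ne_top P B) hd (1:ℝ)
    rw [h, map_add]
  -- representative sets of each measure
  have hS : ∀ a : ℝ≥0∞, ∃ A : Set Ω, MeasurableSet A ∧ P A = min a 1 := by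
    intro a
    obtain ⟨A, -, hAm, hAP⟩ := hP.exists_measure_eq MeasurableSet.univ
      (c := min a 1) (by simp)
    exact ⟨A, hAm, hAP⟩
  choose S hSm hSP using hS
  set g : ℝ≥0∞ → ℝ := fun a => ρ (ind (S a) (hSm a)) with hgdef
  have hg1 : ∀ (A : Set Ω) (hA : MeasurableSet A), ρ (ind A hA) = g (P A) := by
    intro A hA
    refine hInv A (S (P A)) hA (hSm _) ?_
    rw [hSP, min_eq_left prob_le_one]
  have hgadd : ∀ a b : ℝ≥0∞, a + b ≤ 1 → g (a + b) = g a + g b := by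
    intro a b hab
    have ha1 : a ≤ 1 := le_trans (le_add_right le_rfl) hab
    have hatop : a ≠ ∞ := ne_top_of_le_ne_top ENNReal.one_ne_top ha1
    have hCP : P (S (a+b)) = a + b := by rw [hSP, min_eq_left hab]
    obtain ⟨A, hAC, hAm, hAP⟩ := hP.exists_measure_eq (hSm (a+b))
      (c := a) (by rw [hCP]; exact le_add_right le_rfl)
    have hBm : MeasurableSet (S (a+b) \ A) := (hSm _).diff hAm
    have hBP : P (S (a+b) \ A) = b := by
      rw [measure_diff hAC hAm.nullMeasurableSet (measure_ne_top P A), hCP, hAP]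
      exact ENNReal.add_sub_cancel_left hatop
    have hsplit : S (a+b) = A ∪ (S (a+b) \ A) := (Set.union_diff_cancel hAC).symm
    have hd : Disjoint A (S (a+b) \ A) := Set.disjoint_sdiff_right
    calc g (a + b) = ρ (ind (S (a+b)) (hSm _)) := rfl
      _ = ρ (ind (A ∪ (S (a+b) \ A)) (hAm.union hBm)) := hInv _ _ _ _ (by rw [← hsplit])
      _ = ρ (ind A hAm) + ρ (ind (S (a+b) \ A) hBm) := hUnion _ _ _ _ hd
      _ = g a + g b := by rw [hg1 A hAm, hg1 _ hBm, hAP, hBP]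
  have hg0 : g 0 = 0 := by
    have := hgadd 0 0 (by simp)
    simp at this
    linarith
  have hbound : ∀ a : ℝ≥0∞, a ≤ 1 → |g a| ≤ ‖ρ‖ * a.toReal ^ α := by
    intro a ha
    have hnorm : ‖ind (S a) (hSm a)‖ = a.toReal ^ α := by
      rw [hinddef]
      simp only
      rw [norm_indicatorConstLp hp0 hp, measureReal_def, hSP, min_eq_left ha, norm_one, one_mul, hαdef]
    calc |g a| = ‖ρ (ind (S a) (hSm a))‖ := (Real.norm_eq_abs _).symm
      _ ≤ ‖ρ‖ * ‖ind (S a) (hSm a)‖ := ρ.le_opNorm _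
      _ = ‖ρ‖ * a.toReal ^ α := by rw [hnorm]
  have hgone : g 1 = L := by
    have h1 := hInv (S 1) Set.univ (hSm 1) MeasurableSet.univ (by rw [hSP]; simp)
    have h2 : ind Set.univ MeasurableSet.univ = Lp.const p P (1:ℝ) :=
      indicatorConstLp_univ (μ := P) (p := p) (1:ℝ)
    rw [hLdef, ← h2]
    exact h1
  -- the key linearity property
  have hkey : ∀ a : ℝ≥0∞, a ≤ 1 → g a = a.toReal * L := by
    intro a ha
    have hatop : a ≠ ∞ := ne_top_of_le_ne_top ENNReal.one_ne_top ha
    have hat1 : a.toReal ≤ 1 := by simpa using ENNReal.toReal_mono ENNReal.one_ne_top ha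
    have hat0 : (0:ℝ) ≤ a.toReal := ENNReal.toReal_nonneg
    have main : ∀ n : ℕ, |g a - a.toReal * L| ≤ (|L| + ‖ρ‖) * ((1:ℝ)/(n+1)) ^ α := by
      intro n
      set N : ℕ := n + 1 with hN
      have hNpos : (0:ℝ) < N := by positivity
      have hN1 : (1:ℝ) ≤ (N:ℝ) := by exact_mod_cast Nat.one_le_iff_ne_zero.2 (by omega)
      set u : ℝ≥0∞ := (N : ℝ≥0∞)⁻¹ with hu
      have hN0 : (N : ℝ≥0∞) ≠ 0 := by
        simp [hN]
      have hNtop : (N : ℝ≥0∞) ≠ ∞ := ENNReal.natCast_ne_top N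
      have huN : (N : ℝ≥0∞) * u = 1 := ENNReal.mul_inv_cancel hN0 hNtop
      have hutop : u ≠ ∞ := by
        rw [hu]
        simp [hN0]
      have hu1 : u ≤ 1 := by
        rw [hu]
        exact ENNReal.inv_le_one.2 (by exact_mod_cast Nat.one_le_iff_ne_zero.2 (by omega))
      have hureal : u.toReal = 1 / (N:ℝ) := by
        rw [hu, ENNReal.toReal_inv]
        simp
      have hmul : ∀ k : ℕ, k ≤ N → g ((k : ℝ≥0∞) * u) = (k:ℝ) * g u := by
        intro k hk
        induction k with
        | zero => simpa using hg0
        | succ k ih =>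
          have hk' : k ≤ N := Nat.le_of_succ_le hk
          have hcast : ((k+1:ℕ) : ℝ≥0∞) * u = (k:ℝ≥0∞) * u + u := by
            push_cast
            rw [add_mul, one_mul]
          have hle1 : (k:ℝ≥0∞) * u + u ≤ 1 := by
            rw [← hcast, ← huN]
            exact mul_le_mul_left (by exact_mod_cast hk) _
          rw [hcast, hgadd _ _ hle1, ih hk']
          push_cast
          ring
      have hgu : g u = L / N := by
        have h1 : g ((N:ℝ≥0∞) * u) = (N:ℝ) * g u := hmul N le_rfl
        rw [huN, hgone] at h1
        field_simp
        linarith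
      set k : ℕ := ⌊a.toReal * N⌋₊ with hkdef
      have hk1 : (k:ℝ) ≤ a.toReal * N := Nat.floor_le (by positivity)
      have hk2 : a.toReal * N < (k:ℝ) + 1 := Nat.lt_floor_add_one _
      have hkN : k ≤ N := by
        have : (k:ℝ) ≤ (N:ℝ) := le_trans hk1 (by nlinarith)
        exact_mod_cast this
      have hofa : ENNReal.ofReal a.toReal = a := ENNReal.ofReal_toReal hatop
      have hku_le : (k:ℝ≥0∞) * u ≤ a := by
        rw [hu, ← div_eq_mul_inv, ENNReal.div_le_iff_le_mul (Or.inl hN0) (Or.inl hNtop)]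
        rw [← hofa, ← ENNReal.ofReal_natCast N, ← ENNReal.ofReal_natCast k,
          ← ENNReal.ofReal_mul hat0]
        exact ENNReal.ofReal_le_ofReal hk1
      have ha_le : a ≤ ((k:ℝ≥0∞) + 1) * u := by
        rw [hu, ← div_eq_mul_inv, ENNReal.le_div_iff_mul_le (Or.inl hN0) (Or.inl hNtop)]
        rw [← hofa, ← ENNReal.ofReal_natCast N, ← ENNReal.ofReal_mul hat0]
        have hcast : ((k:ℝ≥0∞) + 1) = ENNReal.ofReal ((k:ℝ)+1) := by
          rw [ENNReal.ofReal_add (by positivity) zero_le_one, ENNReal.ofReal_natCast,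
            ENNReal.ofReal_one]
        rw [hcast]
        exact ENNReal.ofReal_le_ofReal hk2.le
      set r : ℝ≥0∞ := a - (k:ℝ≥0∞) * u with hrdef
      have hsum : (k:ℝ≥0∞) * u + r = a := add_tsub_cancel_of_le hku_le
      have hr_le : r ≤ u := by
        rw [hrdef, tsub_le_iff_left]
        calc a ≤ ((k:ℝ≥0∞)+1) * u := ha_le
        _ = (k:ℝ≥0∞) * u + u := by rw [add_mul, one_mul]
      have hr1 : r ≤ 1 := hr_le.trans hu1
      have hrtop : r ≠ ∞ := ne_top_of_le_ne_top hutop hr_le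
      have hkutop : (k:ℝ≥0∞) * u ≠ ∞ := ENNReal.mul_ne_top (ENNReal.natCast_ne_top k) hutop
      have hsplitg : g a = (k:ℝ) * g u + g r := by
        rw [← hsum, hgadd _ _ (by rw [hsum]; exact ha), hmul k hkN]
      have hrR : r.toReal ≤ 1/(N:ℝ) := by
        rw [← hureal]
        exact ENNReal.toReal_mono hutop hr_le
      have hgr : |g r| ≤ ‖ρ‖ * ((1:ℝ)/(N:ℝ)) ^ α := by
        refine (hbound r hr1).trans (mul_le_mul_of_nonneg_left ?_ (norm_nonneg _))
        exact Real.rpow_le_rpow ENNReal.toReal_nonneg hrR hα0.le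
      have hkuR : ((k:ℝ≥0∞) * u).toReal = (k:ℝ) / N := by
        rw [ENNReal.toReal_mul, hureal]
        simp
        ring
      have haR : a.toReal = (k:ℝ)/N + r.toReal := by
        rw [← hsum, ENNReal.toReal_add hkutop hrtop, hkuR]
      have hgaL : g a - a.toReal * L = g r - r.toReal * L := by
        rw [hsplitg, hgu, haR]
        field_simp
        ring
      have h3 : ((1:ℝ)/(N:ℝ)) ≤ ((1:ℝ)/(N:ℝ))^α := by
        calc (1:ℝ)/(N:ℝ) = ((1:ℝ)/(N:ℝ)) ^ (1:ℝ) := (Real.rpow_one _).symm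
        _ ≤ ((1:ℝ)/(N:ℝ))^α := Real.rpow_le_rpow_of_exponent_ge (by positivity)
            (by rw [div_le_one hNpos]; exact hN1) hα1
      have hrpow0 : (0:ℝ) ≤ ((1:ℝ)/(N:ℝ))^α := Real.rpow_nonneg (by positivity) _
      calc |g a - a.toReal * L| = |g r - r.toReal * L| := by rw [hgaL]
      _ ≤ |g r| + r.toReal * |L| := by
          refine (abs_sub _ _).trans ?_
          rw [abs_mul, abs_of_nonneg ENNReal.toReal_nonneg]
      _ ≤ ‖ρ‖ * ((1:ℝ)/(N:ℝ))^α + ((1:ℝ)/(N:ℝ)) * |L| :=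
          add_le_add hgr (mul_le_mul_of_nonneg_right hrR (abs_nonneg _))
      _ ≤ (|L| + ‖ρ‖) * ((1:ℝ)/(N:ℝ))^α := by nlinarith [abs_nonneg L]
      _ = (|L| + ‖ρ‖) * ((1:ℝ)/(n+1)) ^ α := by norm_num [hN]
    have htendsto : Filter.Tendsto (fun n : ℕ => (|L| + ‖ρ‖) * ((1:ℝ)/(n+1))^α)
        Filter.atTop (nhds 0) := by
      have h1 : Filter.Tendsto (fun n : ℕ => (1:ℝ)/(n+1)) Filter.atTop (nhds 0) :=
        tendsto_one_div_add_atTop_nhds_zero_nat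
      have h2 := h1.rpow_const (Or.inr hα0.le)
      rw [Real.zero_rpow hα0.ne'] at h2
      simpa using h2.const_mul (|L| + ‖ρ‖)
    have h0 : |g a - a.toReal * L| ≤ 0 := ge_of_tendsto' htendsto main
    have h0' : g a - a.toReal * L = 0 :=
      abs_eq_zero.mp (le_antisymm h0 (abs_nonneg _))
    linarith
  have hkeyInd : ∀ (A : Set Ω) (hA : MeasurableSet A),
      ρ (ind A hA) = (P A).toReal * L := by
    intro A hA
    rw [hg1 A hA, hkey _ prob_le_one]
  -- integrability and continuity of the integral on Lp
  have hint : ∀ f : Lp ℝ p P, Integrable (f : Ω → ℝ) P := fun f =>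
    (Lp.memLp f).integrable hp1
  have habs : ∀ f : Lp ℝ p P, |∫ ω, f ω ∂P| ≤ ‖f‖ := by
    intro f
    have h1 : |∫ ω, f ω ∂P| ≤ ∫ ω, ‖f ω‖ ∂P := by
      rw [← Real.norm_eq_abs]
      exact norm_integral_le_integral_norm _
    have h2 : ∫ ω, ‖f ω‖ ∂P = (eLpNorm f 1 P).toReal := by
      rw [integral_norm_eq_lintegral_enorm (Lp.aestronglyMeasurable f),
        eLpNorm_one_eq_lintegral_enorm]
    have h3 : eLpNorm f 1 P ≤ eLpNorm f p P :=
      eLpNorm_le_eLpNorm_of_exponent_le hp1 (Lp.aestronglyMeasurable f)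
    rw [Lp.norm_def]
    calc |∫ ω, f ω ∂P| ≤ (eLpNorm f 1 P).toReal := by rw [← h2]; exact h1
    _ ≤ (eLpNorm f p P).toReal := ENNReal.toReal_mono (Lp.eLpNorm_ne_top f) h3
  have hcont : Continuous fun f : Lp ℝ p P => ∫ ω, f ω ∂P := by
    have hlip : LipschitzWith 1 (fun f : Lp ℝ p P => ∫ ω, f ω ∂P) := by
      refine LipschitzWith.of_dist_le_mul fun f g => ?_
      rw [dist_eq_norm, dist_eq_norm]
      have hsub : ∫ ω, f ω ∂P - ∫ ω, g ω ∂P = ∫ ω, (f - g : Lp ℝ p P) ω ∂P := by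
        rw [integral_congr_ae (Lp.coeFn_sub f g)]
        simp only [Pi.sub_apply]
        rw [integral_sub (hint f) (hint g)]
      rw [hsub, Real.norm_eq_abs]
      simpa using habs (f - g)
    exact hlip.continuous
  -- main induction over Lp
  intro X
  refine Lp.induction hp (fun Y : Lp ℝ p P => ρ Y = L * ∫ ω, Y ω ∂P) ?_ ?_ ?_ X
  · intro c s hs hμs
    rw [Lp.simpleFunc.coe_indicatorConst]
    have hsm : indicatorConstLp p hs hμs.ne c
        = c • indicatorConstLp p hs hμs.ne (1:ℝ) := by
      apply Lp.ext
      filter_upwards [indicatorConstLp_coeFn (μ := P) (p := p) (hs := hs)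
          (hμs := hμs.ne) (c := c),
        Lp.coeFn_smul c (indicatorConstLp p hs hμs.ne (1:ℝ)),
        indicatorConstLp_coeFn (μ := P) (p := p) (hs := hs) (hμs := hμs.ne) (c := (1:ℝ))]
        with ω h1 h2 h3
      rw [h1, h2, Pi.smul_apply, h3, smul_eq_mul]
      by_cases hω : ω ∈ s <;> simp [Set.indicator, hω]
    have hρs : ρ (indicatorConstLp p hs hμs.ne (1:ℝ)) = (P s).toReal * L := hkeyInd s hs
    have h1 : ρ (indicatorConstLp p hs hμs.ne c) = c * ((P s).toReal * L) := by
      rw [hsm, ContinuousLinearMap.map_smul, smul_eq_mul, hρs]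
    have h2 : ∫ ω, (indicatorConstLp p hs hμs.ne c) ω ∂P = (P s).toReal * c := by
      rw [integral_congr_ae indicatorConstLp_coeFn, integral_indicator_const c hs, smul_eq_mul, measureReal_def]
    rw [h1, h2]
    ring
  · intro f g' hf hg' hdisj hρf hρg
    have hif : Integrable f P := hf.integrable hp1
    have hig : Integrable g' P := hg'.integrable hp1
    have e1 : ∫ ω, (hf.toLp f) ω ∂P = ∫ ω, f ω ∂P := integral_congr_ae hf.coeFn_toLp
    have e2 : ∫ ω, (hg'.toLp g') ω ∂P = ∫ ω, g' ω ∂P := integral_congr_ae hg'.coeFn_toLp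
    have e3 : ∫ ω, (hf.toLp f + hg'.toLp g' : Lp ℝ p P) ω ∂P
        = ∫ ω, f ω ∂P + ∫ ω, g' ω ∂P := by
      have hae : (⇑(hf.toLp f + hg'.toLp g' : Lp ℝ p P)) =ᵐ[P] f + g' :=
        (Lp.coeFn_add _ _).trans (hf.coeFn_toLp.add hg'.coeFn_toLp)
      rw [integral_congr_ae hae]
      simp only [Pi.add_apply]
      exact integral_add hif hig
    rw [ContinuousLinearMap.map_add, hρf, hρg, e3, e1, e2]
    ring
  · exact isClosed_eq ρ.continuous (continuous_const.mul hcont)
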